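/- (Mixed interpolation inequality; Proposition 6.6(3) of the paper, after Hamilton.) Let i, j, k, l, m, n ≥ 0 be integers such that (i,j) lies on the line segment joining (k,l) and (m,n), i.e. (i,j) = λ(k,l) + (1−λ)(m,n) for some λ ∈ [0,1]. Then for every dimension d ≥ 1 there is a constant C depending only on these integers and on d such that all smooth functions f, g : ℝ^d → ℝ with bounded derivatives satisfy |f|_i · |g|_j ≤ C (|f|_k · |g|_l + |f|_m · |g|_n). -/

import Mathlib

noncomputable section

open Set

/-- The `C^j` sup-norm of a map on `ℝ^d`: the supremum over all points of the maximum of the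
norms of the iterated derivatives of order at most `j`. -/
def cnorm {d : ℕ} {F : Type*} [NormedAddCommGroup F] [NormedSpace ℝ F]
    (j : ℕ) (f : (Fin d → ℝ) → F) : ℝ :=
  ⨆ p : (Fin d → ℝ) × Fin (j + 1), ‖iteratedFDeriv ℝ (p.2 : ℕ) f p.1‖

/-- `f` has bounded derivatives of all orders. -/
def BoundedDerivs {d : ℕ} {F : Type*} [NormedAddCommGroup F] [NormedSpace ℝ F]
    (f : (Fin d → ℝ) → F) : Prop :=
  ∀ j : ℕ, ∃ C : ℝ, ∀ x, ‖iteratedFDeriv ℝ j f x‖ ≤ C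


theorem landau1d {E : Type*} [NormedAddCommGroup E] [NormedSpace ℝ E]
    (g g' g'' : ℝ → E)
    (hg : ∀ t, HasDerivAt g (g' t) t) (hg' : ∀ t, HasDerivAt g' (g'' t) t)
    {B C : ℝ} (hB : ∀ t, ‖g t‖ ≤ B) (hC : ∀ t, ‖g'' t‖ ≤ C) :
    ‖g' 0‖ ^ 2 ≤ 8 * B * C := by
  have hB0 : 0 ≤ B := (norm_nonneg _).trans (hB 0)
  have hC0 : 0 ≤ C := (norm_nonneg _).trans (hC 0)
  have key : ∀ h : ℝ, 0 < h → h * ‖g' 0‖ ≤ 2 * B + C * h ^ 2 := by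
    intro h hh
    -- bound on g' variation
    have hvar : ∀ t ∈ Icc (0:ℝ) h, ‖g' t - g' 0‖ ≤ C * h := by
      intro t ht
      have := (convex_univ (𝕜 := ℝ) (E := ℝ)).norm_image_sub_le_of_norm_hasDerivWithin_le
        (f := g') (f' := g'') (C := C)
        (fun x _ => (hg' x).hasDerivWithinAt) (fun x _ => hC x) (mem_univ (0:ℝ)) (mem_univ t)
      calc ‖g' t - g' 0‖ ≤ C * ‖t - 0‖ := this
        _ ≤ C * h := by
          rw [sub_zero, Real.norm_eq_abs, abs_of_nonneg ht.1]
          exact mul_le_mul_of_nonneg_left ht.2 hC0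
    set φ : ℝ → E := fun t => g t - t • g' 0 with hφ
    have hφd : ∀ t, HasDerivAt φ (g' t - g' 0) t := fun t =>
      (hg t).sub ((hasDerivAt_id t).smul_const (g' 0) |>.congr_deriv (by simp))
    have mvt : ‖φ h - φ 0‖ ≤ (C * h) * ‖h - 0‖ :=
      (convex_Icc (0:ℝ) h).norm_image_sub_le_of_norm_hasDerivWithin_le
        (fun x _ => (hφd x).hasDerivWithinAt) hvar
        (left_mem_Icc.2 hh.le) (right_mem_Icc.2 hh.le)
    have : ‖h • g' 0‖ ≤ 2 * B + C * h ^ 2 := by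
      have h1 : ‖g h - g 0 - h • g' 0‖ ≤ C * h ^ 2 := by
        have : φ h - φ 0 = g h - g 0 - h • g' 0 := by simp [hφ]; abel
        rw [this] at mvt
        calc ‖g h - g 0 - h • g' 0‖ ≤ C * h * ‖h - 0‖ := mvt
          _ = C * h ^ 2 := by rw [sub_zero, Real.norm_eq_abs, abs_of_nonneg hh.le]; ring
      calc ‖h • g' 0‖ = ‖(g h - g 0) - (g h - g 0 - h • g' 0)‖ := by congr 1; abel
        _ ≤ ‖g h - g 0‖ + ‖g h - g 0 - h • g' 0‖ := norm_sub_le _ _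
        _ ≤ (‖g h‖ + ‖g 0‖) + C * h ^ 2 := by gcongr; exact norm_sub_le _ _
        _ ≤ 2 * B + C * h ^ 2 := by have := hB h; have := hB 0; linarith
    rwa [norm_smul, Real.norm_eq_abs, abs_of_nonneg hh.le] at this
  set a := ‖g' 0‖ with ha
  have ha0 : 0 ≤ a := norm_nonneg _
  rcases eq_or_lt_of_le ha0 with h0 | h0
  · nlinarith
  rcases eq_or_lt_of_le hC0 with hc | hc
  · exfalso
    have := key ((2 * B + 1) / a) (by positivity)
    rw [← hc] at this
    rw [div_mul_cancel₀ _ (ne_of_gt h0)] at this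
    linarith
  · have h1 := key (a / (2 * C)) (by positivity)
    have e1 : (a / (2 * C) * a) * (4 * C) = 2 * a ^ 2 := by field_simp; ring
    have e2 : (2 * B + C * (a / (2 * C)) ^ 2) * (4 * C) = 8 * B * C + a ^ 2 := by
      field_simp; ring
    have h2 := mul_le_mul_of_nonneg_right h1 (by positivity : (0:ℝ) ≤ 4 * C)
    rw [e1, e2] at h2
    linarith

theorem landau_point {d : ℕ} (f : (Fin d → ℝ) → ℝ) (hf : ContDiff ℝ (⊤ : ℕ∞) f) (p : ℕ)
    {B C : ℝ} (hB : ∀ x, ‖iteratedFDeriv ℝ p f x‖ ≤ B)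
    (hC : ∀ x, ‖iteratedFDeriv ℝ (p + 2) f x‖ ≤ C) (x : Fin d → ℝ) :
    ‖iteratedFDeriv ℝ (p + 1) f x‖ ^ 2 ≤ 8 * B * C := by
  have hB0 : 0 ≤ B := (norm_nonneg _).trans (hB x)
  have hC0 : 0 ≤ C := (norm_nonneg _).trans (hC x)
  have hFp : Differentiable ℝ (iteratedFDeriv ℝ p f) :=
    hf.differentiable_iteratedFDeriv (by exact_mod_cast WithTop.coe_lt_top _)
  have hFp1 : Differentiable ℝ (iteratedFDeriv ℝ (p + 1) f) :=
    hf.differentiable_iteratedFDeriv (by exact_mod_cast WithTop.coe_lt_top _)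
  rw [← norm_fderiv_iteratedFDeriv]
  have main : ∀ v : (Fin d → ℝ), ‖fderiv ℝ (iteratedFDeriv ℝ p f) x v‖ ≤ Real.sqrt (8 * B * C) * ‖v‖ := by
    intro v
    -- the curried picture
    set A := continuousMultilinearCurryLeftEquiv ℝ (fun _ : Fin (p + 1) => (Fin d → ℝ)) ℝ with hA
    set Φ : ((Fin d → ℝ) [×(p+1)]→L[ℝ] ℝ) →L[ℝ] ((Fin d → ℝ) [×p]→L[ℝ] ℝ) :=
      (ContinuousLinearMap.apply ℝ ((Fin d → ℝ) [×p]→L[ℝ] ℝ) v).comp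
        (A.toLinearIsometry.toContinuousLinearMap) with hΦ
    set line : ℝ → (Fin d → ℝ) := fun t => x + t • v with hline
    have hlined : ∀ t : ℝ, HasDerivAt line v t := by
      intro t
      exact (((hasDerivAt_id t).smul_const v).const_add x).congr_deriv (one_smul _ _)
    set g : ℝ → ((Fin d → ℝ) [×p]→L[ℝ] ℝ) := fun t => iteratedFDeriv ℝ p f (line t) with hg
    set g' : ℝ → ((Fin d → ℝ) [×p]→L[ℝ] ℝ) := fun t => Φ (iteratedFDeriv ℝ (p+1) f (line t)) with hg'
    set g'' : ℝ → ((Fin d → ℝ) [×p]→L[ℝ] ℝ) :=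
      fun t => Φ ((continuousMultilinearCurryLeftEquiv ℝ (fun _ : Fin (p + 2) => (Fin d → ℝ)) ℝ)
        (iteratedFDeriv ℝ (p+2) f (line t)) v) with hg''
    have hgd : ∀ t, HasDerivAt g (g' t) t := by
      intro t
      have h1 : HasFDerivAt (iteratedFDeriv ℝ p f) (fderiv ℝ (iteratedFDeriv ℝ p f) (line t))
          (line t) := (hFp (line t)).hasFDerivAt
      have h2 := h1.comp_hasDerivAt t (hlined t)
      have h3 : fderiv ℝ (iteratedFDeriv ℝ p f) (line t) v = g' t := by
        rw [fderiv_iteratedFDeriv]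
        rfl
      rw [← h3]; exact h2
    have hgd' : ∀ t, HasDerivAt g' (g'' t) t := by
      intro t
      have h1 : HasFDerivAt (iteratedFDeriv ℝ (p+1) f)
          (fderiv ℝ (iteratedFDeriv ℝ (p+1) f) (line t)) (line t) := (hFp1 (line t)).hasFDerivAt
      have h2 := h1.comp_hasDerivAt t (hlined t)
      have h3 := (Φ.hasFDerivAt.comp_hasDerivAt t h2)
      have h4 : Φ (fderiv ℝ (iteratedFDeriv ℝ (p+1) f) (line t) v) = g'' t := by
        rw [fderiv_iteratedFDeriv]
        rfl
      rw [← h4]; exact h3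
    have hgB : ∀ t, ‖g t‖ ≤ B := fun t => hB (line t)
    have hgC : ∀ t, ‖g'' t‖ ≤ C * ‖v‖ ^ 2 := by
      intro t
      set W := (continuousMultilinearCurryLeftEquiv ℝ (fun _ : Fin (p + 2) => (Fin d → ℝ)) ℝ)
        (iteratedFDeriv ℝ (p+2) f (line t)) with hW
      have hWn : ‖W‖ ≤ C := by
        rw [hW, LinearIsometryEquiv.norm_map]; exact hC (line t)
      have e2 : ‖W v‖ ≤ C * ‖v‖ :=
        (W.le_opNorm v).trans (mul_le_mul_of_nonneg_right hWn (norm_nonneg v))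
      have e0 : g'' t = A (W v) v := rfl
      have e1 : ‖g'' t‖ ≤ ‖W v‖ * ‖v‖ := by
        rw [e0]
        exact ((A (W v)).le_opNorm v).trans (by rw [A.norm_map])
      calc ‖g'' t‖ ≤ ‖W v‖ * ‖v‖ := e1
        _ ≤ C * ‖v‖ * ‖v‖ := mul_le_mul_of_nonneg_right e2 (norm_nonneg v)
        _ = C * ‖v‖ ^ 2 := by ring
    have hland := landau1d g g' g'' hgd hgd' hgB hgC
    have hg0 : g' 0 = fderiv ℝ (iteratedFDeriv ℝ p f) x v := by
      rw [fderiv_iteratedFDeriv]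
      simp [hg', hline, hΦ]
      rfl
    rw [hg0] at hland
    have h8 : (0:ℝ) ≤ 8 * B * C := by positivity
    have hsq : (Real.sqrt (8 * B * C) * ‖v‖) ^ 2 = 8 * B * (C * ‖v‖ ^ 2) := by
      rw [mul_pow, Real.sq_sqrt h8]; ring
    have := hsq ▸ hland
    exact (pow_le_pow_iff_left₀ (norm_nonneg _) (by positivity) (by norm_num)).1 this
  have hop : ‖fderiv ℝ (iteratedFDeriv ℝ p f) x‖ ≤ Real.sqrt (8 * B * C) :=
    ContinuousLinearMap.opNorm_le_bound _ (Real.sqrt_nonneg _) main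
  calc ‖fderiv ℝ (iteratedFDeriv ℝ p f) x‖ ^ 2 ≤ Real.sqrt (8 * B * C) ^ 2 := by
        exact pow_le_pow_left₀ (ContinuousLinearMap.opNorm_nonneg _) hop 2
    _ = 8 * B * C := Real.sq_sqrt (by positivity)

theorem chord (ψ : ℕ → ℝ) (a b : ℕ)
    (hconv : ∀ t, a ≤ t → t + 2 ≤ b → ψ (t+1) - ψ t ≤ ψ (t+2) - ψ (t+1))
    (i : ℕ) (hai : a ≤ i) (hib : i ≤ b) :
    ((b:ℝ) - a) * ψ i ≤ ((b:ℝ) - i) * ψ a + ((i:ℝ) - a) * ψ b := by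
  rcases eq_or_lt_of_le hai with rfl | hai'
  · ring_nf; rfl
  rcases eq_or_lt_of_le hib with rfl | hib'
  · ring_nf; rfl
  -- a < i < b
  set δ : ℕ → ℝ := fun t => ψ (t+1) - ψ t with hδ
  have hδmono : ∀ s t, a ≤ s → s ≤ t → t + 1 ≤ b → δ s ≤ δ t := by
    intro s t has hst htb
    induction t with
    | zero =>
      have : s = 0 := Nat.le_zero.mp hst
      subst this; exact le_rfl
    | succ u ih =>
      rcases eq_or_lt_of_le hst with rfl | h
      · exact le_rfl
      · exact le_trans (ih (by omega) (by omega)) (hconv u (by omega) (by omega))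
  have hsum1 : ∑ t ∈ Finset.range (i - a), δ (a + t) = ψ i - ψ a := by
    have tele := Finset.sum_range_sub (fun t => ψ (a + t)) (i - a)
    rw [show ψ i - ψ a = ψ (a + (i-a)) - ψ (a + 0) by
      rw [Nat.add_sub_cancel' hai, Nat.add_zero]]
    rw [← tele]
    exact Finset.sum_congr rfl fun t _ => by simp only [hδ, Nat.add_succ]
  have hsum2 : ∑ t ∈ Finset.range (b - i), δ (i + t) = ψ b - ψ i := by
    have tele := Finset.sum_range_sub (fun t => ψ (i + t)) (b - i)
    rw [show ψ b - ψ i = ψ (i + (b-i)) - ψ (i + 0) by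
      rw [Nat.add_sub_cancel' hib, Nat.add_zero]]
    rw [← tele]
    exact Finset.sum_congr rfl fun t _ => by simp only [hδ, Nat.add_succ]
  have key1 : ψ i - ψ a ≤ ((i:ℝ) - a) * δ (i - 1) := by
    rw [← hsum1]
    have := Finset.sum_le_card_nsmul (Finset.range (i - a)) (fun t => δ (a + t)) (δ (i - 1))
      (fun t ht => by
        simp only [Finset.mem_range] at ht
        exact hδmono (a + t) (i - 1) (by omega) (by omega) (by omega))
    rw [Finset.card_range, nsmul_eq_mul] at this
    refine this.trans (le_of_eq ?_)
    rw [Nat.cast_sub hai]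
  have key2 : ((b:ℝ) - i) * δ i ≤ ψ b - ψ i := by
    rw [← hsum2]
    have := Finset.card_nsmul_le_sum (Finset.range (b - i)) (fun t => δ (i + t)) (δ i)
      (fun t ht => by
        simp only [Finset.mem_range] at ht
        exact hδmono i (i + t) hai (by omega) (by omega))
    rw [Finset.card_range, nsmul_eq_mul] at this
    refine le_trans (le_of_eq ?_) this
    rw [Nat.cast_sub hib]
  have hDD : δ (i - 1) ≤ δ i := hδmono (i - 1) i (by omega) (by omega) (by omega)
  have hp : (0:ℝ) < (i:ℝ) - a := by
    have : (a:ℝ) < i := by exact_mod_cast hai'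
    linarith
  have hq : (0:ℝ) < (b:ℝ) - i := by
    have : (i:ℝ) < b := by exact_mod_cast hib'
    linarith
  nlinarith [mul_le_mul_of_nonneg_left key1 hq.le, mul_le_mul_of_nonneg_left key2 hp.le,
    mul_le_mul_of_nonneg_left (mul_le_mul_of_nonneg_left hDD hp.le) hq.le]

theorem interp (c : ℕ → ℝ) (h0 : ∀ p, 0 ≤ c p)
    (hl : ∀ t, c (t+1) ^ 2 ≤ 8 * c t * c (t+2)) (a i b : ℕ) (hai : a ≤ i) (hib : i ≤ b) :
    c i ^ (b - a) ≤ 8 ^ ((b-a)^3) * (c a ^ (b - i) * c b ^ (i - a)) := by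
  have h8 : (1:ℝ) ≤ 8 ^ ((b-a)^3) := one_le_pow₀ (by norm_num)
  by_cases hia : i = a
  · subst hia
    rw [Nat.sub_self, pow_zero, mul_one]
    nlinarith [pow_nonneg (h0 i) (b - i), h8]
  by_cases hib2 : i = b
  · subst hib2
    rw [Nat.sub_self, pow_zero, one_mul]
    nlinarith [pow_nonneg (h0 i) (i - a), h8]
  have hai' : a < i := lt_of_le_of_ne hai (Ne.symm hia)
  have hib' : i < b := lt_of_le_of_ne hib hib2
  -- now a < i < b
  by_cases hz : ∃ t0, a ≤ t0 ∧ t0 ≤ b ∧ c t0 = 0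
  · -- zero case: c i = 0
    have up : ∀ t0, c t0 = 0 → ∀ s, c (t0 + s) = 0 := by
      intro t0 h s
      induction s with
      | zero => exact h
      | succ u ih =>
        have h1 := hl (t0 + u)
        rw [ih] at h1
        have h2 : c (t0 + u + 1) ^ 2 ≤ 0 := by linarith [h1]
        have := h0 (t0 + u + 1)
        have : c (t0 + u + 1) = 0 := by nlinarith
        rw [Nat.add_succ]; exact this
    have down : ∀ s t0, c t0 = 0 → 1 ≤ t0 - s → c (t0 - s) = 0 := by
      intro s
      induction s with
      | zero => intro t0 h _; simpa using h
      | succ u ih =>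
        intro t0 h hge
        set t := t0 - (u + 1) with ht
        have ht1 : 1 ≤ t := hge
        have hprev : c (t + 1) = 0 := by
          have : t + 1 = t0 - u := by omega
          rw [this]; exact ih t0 h (by omega)
        have h1 := hl (t - 1)
        have e1 : t - 1 + 1 = t := by omega
        have e2 : t - 1 + 2 = t + 1 := by omega
        rw [e1, e2, hprev] at h1
        have h2 : c t ^ 2 ≤ 0 := by linarith
        have := h0 t
        nlinarith
    obtain ⟨t0, ht0a, ht0b, ht0⟩ := hz
    have hci : c i = 0 := by
      rcases le_or_gt t0 i with h | h
      · have := up t0 ht0 (i - t0)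
        rwa [Nat.add_sub_cancel' h] at this
      · have := down (t0 - i) t0 ht0 (by omega)
        rwa [show t0 - (t0 - i) = i by omega] at this
    rw [hci, zero_pow (by omega)]
    exact mul_nonneg (by positivity) (mul_nonneg (pow_nonneg (h0 a) _) (pow_nonneg (h0 b) _))
  · -- positive case
    push_neg at hz
    have hpos : ∀ t, a ≤ t → t ≤ b → 0 < c t := by
      intro t h1 h2
      exact lt_of_le_of_ne (h0 t) (Ne.symm (hz t h1 h2))
    set L := Real.log 8 with hLdef
    have hL : 0 ≤ L := Real.log_nonneg (by norm_num)
    set ψ : ℕ → ℝ := fun t => Real.log (c t) + (t:ℝ)^2 * L with hψ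
    have hconv : ∀ t, a ≤ t → t + 2 ≤ b → ψ (t+1) - ψ t ≤ ψ (t+2) - ψ (t+1) := by
      intro t h1 h2
      have p0 : 0 < c t := hpos t h1 (by omega)
      have p1 : 0 < c (t+1) := hpos (t+1) (by omega) (by omega)
      have p2 : 0 < c (t+2) := hpos (t+2) (by omega) (by omega)
      have hlog : Real.log (c (t+1) ^ 2) ≤ Real.log (8 * c t * c (t+2)) :=
        (Real.log_le_log_iff (by positivity) (by positivity)).2 (hl t)
      rw [Real.log_pow, Real.log_mul (by positivity) (ne_of_gt p2),
        Real.log_mul (by norm_num) (ne_of_gt p0)] at hlog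
      rw [← hLdef] at hlog
      push_cast at hlog
      have hq2 : ((t:ℝ))^2 * L + ((t:ℝ)+2)^2 * L - 2*((t:ℝ)+1)^2 * L = 2 * L := by ring
      simp only [hψ]
      push_cast
      linarith [hlog, hL, hq2]
    have hchord := chord ψ a b hconv i hai hib
    -- unfold and conclude
    have pa : 0 < c a := hpos a le_rfl (by omega)
    have pi : 0 < c i := hpos i hai hib
    have pb : 0 < c b := hpos b (by omega) le_rfl
    have hcast1 : ((b - a : ℕ) : ℝ) = (b:ℝ) - a := by
      rw [Nat.cast_sub (by omega)]
    have hcast2 : ((b - i : ℕ) : ℝ) = (b:ℝ) - i := by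
      rw [Nat.cast_sub (by omega)]
    have hcast3 : ((i - a : ℕ) : ℝ) = (i:ℝ) - a := by
      rw [Nat.cast_sub (by omega)]
    rw [← Real.log_le_log_iff (by positivity) (by positivity)]
    rw [Real.log_pow, Real.log_mul (by positivity) (by positivity),
      Real.log_mul (by positivity) (by positivity), Real.log_pow, Real.log_pow, Real.log_pow]
    rw [hcast1, hcast2, hcast3]
    -- hchord : (b-a) ψ i ≤ (b-i) ψ a + (i-a) ψ b
    simp only [hψ] at hchord
    have hGle : ((b:ℝ)-i)*(a:ℝ)^2 + ((i:ℝ)-a)*(b:ℝ)^2 - ((b:ℝ)-a)*(i:ℝ)^2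
        ≤ ((b:ℝ)-a)^3 := by
      have hid : ((b:ℝ)-i)*(a:ℝ)^2 + ((i:ℝ)-a)*(b:ℝ)^2 - ((b:ℝ)-a)*(i:ℝ)^2
          = ((b:ℝ)-a)*((i:ℝ)-a)*((b:ℝ)-i) := by ring
      rw [hid]
      have h1 : (0:ℝ) ≤ (i:ℝ)-a := by
        have : (a:ℝ) ≤ i := by exact_mod_cast hai
        linarith
      have h2 : (0:ℝ) ≤ (b:ℝ)-i := by
        have : (i:ℝ) ≤ b := by exact_mod_cast hib
        linarith
      have h3 : (i:ℝ)-a ≤ (b:ℝ)-a := by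
        have : (i:ℝ) ≤ b := by exact_mod_cast hib
        linarith
      have h4 : (b:ℝ)-i ≤ (b:ℝ)-a := by
        have : (a:ℝ) ≤ i := by exact_mod_cast hai
        linarith
      have h5 : (0:ℝ) ≤ (b:ℝ)-a := by linarith
      have h6 : ((i:ℝ)-a)*((b:ℝ)-i) ≤ ((b:ℝ)-a)*((b:ℝ)-a) := mul_le_mul h3 h4 h2 h5
      calc ((b:ℝ)-a)*((i:ℝ)-a)*((b:ℝ)-i) = ((b:ℝ)-a)*(((i:ℝ)-a)*((b:ℝ)-i)) := by ring
        _ ≤ ((b:ℝ)-a)*(((b:ℝ)-a)*((b:ℝ)-a)) := mul_le_mul_of_nonneg_left h6 h5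
        _ = ((b:ℝ)-a)^3 := by ring
    have hcastE : (((b - a)^3 : ℕ) : ℝ) = ((b:ℝ) - a)^3 := by
      push_cast [Nat.cast_sub (show a ≤ b by omega)]; ring
    rw [hcastE]
    have hGL := mul_le_mul_of_nonneg_right hGle hL
    rw [← hLdef]
    linarith [hchord, hGL]

theorem cnorm_nonneg {d : ℕ} (j : ℕ) (f : (Fin d → ℝ) → ℝ) : 0 ≤ cnorm j f :=
  Real.iSup_nonneg fun _ => norm_nonneg _

theorem cnorm_bdd {d : ℕ} {f : (Fin d → ℝ) → ℝ} (hf : BoundedDerivs f) (j : ℕ) :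
    BddAbove (Set.range fun p : (Fin d → ℝ) × Fin (j + 1) =>
      ‖iteratedFDeriv ℝ (p.2 : ℕ) f p.1‖) := by
  choose Cf hCf using hf
  refine ⟨Finset.univ.sup' Finset.univ_nonempty (fun q : Fin (j + 1) => Cf (q : ℕ)), ?_⟩
  rintro y ⟨p, rfl⟩
  exact (hCf _ _).trans (Finset.le_sup' (f := fun q : Fin (j + 1) => Cf (q : ℕ)) (Finset.mem_univ p.2))

theorem le_cnorm {d : ℕ} {f : (Fin d → ℝ) → ℝ} (hf : BoundedDerivs f) {j q : ℕ} (hq : q ≤ j)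
    (x : Fin d → ℝ) : ‖iteratedFDeriv ℝ q f x‖ ≤ cnorm j f := by
  have := le_ciSup (cnorm_bdd hf j) (⟨x, ⟨q, by omega⟩⟩ : (Fin d → ℝ) × Fin (j + 1))
  exact this

theorem cnorm_le {d : ℕ} {f : (Fin d → ℝ) → ℝ} {j : ℕ} {M : ℝ}
    (h : ∀ (x : Fin d → ℝ) (q : ℕ), q ≤ j → ‖iteratedFDeriv ℝ q f x‖ ≤ M) :
    cnorm j f ≤ M :=
  ciSup_le fun p => h p.1 p.2 (by omega)

theorem cnorm_landau {d : ℕ} {f : (Fin d → ℝ) → ℝ} (hf : ContDiff ℝ (⊤ : ℕ∞) f)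
    (hfb : BoundedDerivs f) (t : ℕ) :
    cnorm (t + 1) f ^ 2 ≤ 8 * cnorm t f * cnorm (t + 2) f := by
  set B := cnorm t f with hB
  set C := cnorm (t + 2) f with hC
  have hB0 : 0 ≤ B := cnorm_nonneg _ _
  have hC0 : 0 ≤ C := cnorm_nonneg _ _
  have hBC : B ≤ C := cnorm_le fun x q hq => le_cnorm hfb (by omega) x
  have hpt : ∀ x, ‖iteratedFDeriv ℝ (t + 1) f x‖ ^ 2 ≤ 8 * B * C :=
    landau_point f hf t (fun x => le_cnorm hfb le_rfl x) (fun x => le_cnorm hfb le_rfl x)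
  have hle : cnorm (t + 1) f ≤ Real.sqrt (8 * B * C) := by
    apply cnorm_le
    intro x q hq
    rcases Nat.lt_or_ge q (t + 1) with h | h
    · refine (le_cnorm hfb (by omega : q ≤ t) x).trans ?_
      exact (Real.le_sqrt hB0 (by positivity)).2 (by nlinarith)
    · have hq' : q = t + 1 := by omega
      subst hq'
      exact (Real.le_sqrt (norm_nonneg _) (by positivity)).2 (hpt x)
  calc cnorm (t + 1) f ^ 2 ≤ Real.sqrt (8 * B * C) ^ 2 :=
        pow_le_pow_left₀ (cnorm_nonneg _ _) hle 2
    _ = 8 * B * C := Real.sq_sqrt (by positivity)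

theorem pair {u x y : ℝ} (hu : 0 ≤ u) (hx : 0 ≤ x) (hy : 0 ≤ y) (P G D E : ℕ)
    (hP : 0 < P) (hGD : G + D = P) (h : u ^ P ≤ 8 ^ E * (x ^ G * y ^ D)) :
    u ≤ 8 ^ E * (x + y) := by
  have h1 : x ^ G * y ^ D ≤ (x + y) ^ P := by
    rw [← hGD, pow_add]
    exact mul_le_mul (pow_le_pow_left₀ hx (by linarith) G)
      (pow_le_pow_left₀ hy (by linarith) D) (pow_nonneg hy D) (pow_nonneg (by linarith) G)
  have h2 : (8:ℝ) ^ E ≤ ((8:ℝ) ^ E) ^ P := le_self_pow₀ (one_le_pow₀ (by norm_num)) (by omega)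
  have h3 : u ^ P ≤ (8 ^ E * (x + y)) ^ P := by
    rw [mul_pow]
    calc u ^ P ≤ 8 ^ E * (x ^ G * y ^ D) := h
      _ ≤ 8 ^ E * (x + y) ^ P := mul_le_mul_of_nonneg_left h1 (by positivity)
      _ ≤ (8 ^ E) ^ P * (x + y) ^ P := mul_le_mul_of_nonneg_right h2 (by positivity)
  exact le_of_pow_le_pow_left₀ (by omega) (by positivity) h3

theorem combine_pows {ci ej ck cm el en : ℝ} (hci : 0 ≤ ci) (hej : 0 ≤ ej)
    (hck : 0 ≤ ck) (hcm : 0 ≤ cm) (hel : 0 ≤ el) (hen : 0 ≤ en)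
    {M N p1 p2 q1 q2 E1 E2 : ℕ}
    (hIf : ci ^ M ≤ 8 ^ E1 * (ck ^ p1 * cm ^ p2))
    (hIg : ej ^ N ≤ 8 ^ E2 * (en ^ q2 * el ^ q1))
    (h1 : q1 * M = p1 * N) (h2 : q2 * M = p2 * N) :
    (ci * ej) ^ (M * N) ≤
      8 ^ (E1 * N + E2 * M) * ((ck * el) ^ (p1 * N) * (cm * en) ^ (p2 * N)) := by
  have hIfN := pow_le_pow_left₀ (pow_nonneg hci M) hIf N
  have hIgM := pow_le_pow_left₀ (pow_nonneg hej N) hIg M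
  calc (ci * ej) ^ (M * N) = (ci ^ M) ^ N * (ej ^ N) ^ M := by
        rw [mul_pow, ← pow_mul, ← pow_mul, mul_comm N M]
    _ ≤ (8 ^ E1 * (ck ^ p1 * cm ^ p2)) ^ N * (8 ^ E2 * (en ^ q2 * el ^ q1)) ^ M :=
        mul_le_mul hIfN hIgM (pow_nonneg (pow_nonneg hej N) M)
          (pow_nonneg (mul_nonneg (by positivity)
            (mul_nonneg (pow_nonneg hck _) (pow_nonneg hcm _))) N)
    _ = 8 ^ (E1 * N + E2 * M) *
        ((ck ^ (p1 * N) * el ^ (q1 * M)) * (cm ^ (p2 * N) * en ^ (q2 * M))) := by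
        rw [mul_pow, mul_pow, mul_pow, mul_pow, ← pow_mul, ← pow_mul, ← pow_mul, ← pow_mul,
          ← pow_mul, ← pow_mul, pow_add]
        ring
    _ = 8 ^ (E1 * N + E2 * M) * ((ck * el) ^ (p1 * N) * (cm * en) ^ (p2 * N)) := by
        rw [h1, h2, mul_pow, mul_pow]

theorem aux (i j k l m n d : ℕ) (lam : ℝ) (hl0 : 0 ≤ lam) (hl1 : lam ≤ 1)
    (hi : (i:ℝ) = lam*k + (1-lam)*m) (hj : (j:ℝ) = lam*l + (1-lam)*n) (hkm : k ≤ m) :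
    ∃ C : ℝ, ∀ f g : (Fin d → ℝ) → ℝ, ContDiff ℝ (⊤:ℕ∞) f → BoundedDerivs f →
      ContDiff ℝ (⊤:ℕ∞) g → BoundedDerivs g →
      cnorm i f * cnorm j g ≤ C * (cnorm k f * cnorm l g + cnorm m f * cnorm n g) := by
  have hkmR : (k:ℝ) ≤ m := by exact_mod_cast hkm
  have hki : k ≤ i := by
    have : (k:ℝ) ≤ i := by
      rw [hi]; nlinarith [mul_le_mul_of_nonneg_left hkmR (by linarith : (0:ℝ) ≤ 1 - lam)]
    exact_mod_cast this
  have him : i ≤ m := by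
    have : (i:ℝ) ≤ m := by
      rw [hi]; nlinarith [mul_le_mul_of_nonneg_left hkmR hl0]
    exact_mod_cast this
  rcases le_total n l with hnl | hln
  · -- branch A : n ≤ j ≤ l
    have hnlR : (n:ℝ) ≤ l := by exact_mod_cast hnl
    have hnj : n ≤ j := by
      have : (n:ℝ) ≤ j := by
        rw [hj]; nlinarith [mul_le_mul_of_nonneg_left hnlR hl0]
      exact_mod_cast this
    have hjl : j ≤ l := by
      have : (j:ℝ) ≤ l := by
        rw [hj]; nlinarith [mul_le_mul_of_nonneg_left hnlR (by linarith : (0:ℝ) ≤ 1 - lam)]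
      exact_mod_cast this
    by_cases hM : m - k = 0
    · obtain rfl : i = k := by omega
      obtain rfl : i = m := by omega
      by_cases hN : l - n = 0
      · obtain rfl : j = n := by omega
        obtain rfl : j = l := by omega
        refine ⟨1, fun f g hf hfb hg hgb => ?_⟩
        have h1 : 0 ≤ cnorm i f * cnorm j g :=
          mul_nonneg (cnorm_nonneg _ _) (cnorm_nonneg _ _)
        linarith
      · refine ⟨8 ^ ((l-n)^3), fun f g hf hfb hg hgb => ?_⟩
        have hc0 : (0:ℝ) ≤ cnorm i f := cnorm_nonneg _ _
        have hIg := interp (fun p => cnorm p g) (fun p => cnorm_nonneg p g)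
          (cnorm_landau hg hgb) n j l hnj hjl
        have hsplit : cnorm i f ^ (l - n) = cnorm i f ^ (j - n) * cnorm i f ^ (l - j) := by
          rw [← pow_add]; congr 1; omega
        have key : (cnorm i f * cnorm j g) ^ (l - n) ≤
            8 ^ ((l-n)^3) * ((cnorm i f * cnorm l g) ^ (j - n) *
              (cnorm i f * cnorm n g) ^ (l - j)) := by
          calc (cnorm i f * cnorm j g) ^ (l - n)
              = cnorm i f ^ (l - n) * cnorm j g ^ (l - n) := mul_pow _ _ _
            _ ≤ cnorm i f ^ (l - n) *
                (8 ^ ((l-n)^3) * (cnorm n g ^ (l - j) * cnorm l g ^ (j - n))) :=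
                mul_le_mul_of_nonneg_left hIg (pow_nonneg hc0 _)
            _ = 8 ^ ((l-n)^3) * ((cnorm i f ^ (j - n) * cnorm l g ^ (j - n)) *
                (cnorm i f ^ (l - j) * cnorm n g ^ (l - j))) := by
                rw [hsplit]; ring
            _ = 8 ^ ((l-n)^3) * ((cnorm i f * cnorm l g) ^ (j - n) *
                (cnorm i f * cnorm n g) ^ (l - j)) := by
                rw [mul_pow, mul_pow]
        exact pair (mul_nonneg hc0 (cnorm_nonneg _ _))
          (mul_nonneg hc0 (cnorm_nonneg _ _)) (mul_nonneg hc0 (cnorm_nonneg _ _))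
          (l - n) (j - n) (l - j) ((l-n)^3) (by omega) (by omega) key
    · by_cases hN : l - n = 0
      · obtain rfl : j = n := by omega
        obtain rfl : j = l := by omega
        refine ⟨8 ^ ((m-k)^3), fun f g hf hfb hg hgb => ?_⟩
        have he0 : (0:ℝ) ≤ cnorm j g := cnorm_nonneg _ _
        have hIf := interp (fun p => cnorm p f) (fun p => cnorm_nonneg p f)
          (cnorm_landau hf hfb) k i m hki him
        have hsplit : cnorm j g ^ (m - k) = cnorm j g ^ (m - i) * cnorm j g ^ (i - k) := by
          rw [← pow_add]; congr 1; omega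
        have key : (cnorm i f * cnorm j g) ^ (m - k) ≤
            8 ^ ((m-k)^3) * ((cnorm k f * cnorm j g) ^ (m - i) *
              (cnorm m f * cnorm j g) ^ (i - k)) := by
          calc (cnorm i f * cnorm j g) ^ (m - k)
              = cnorm i f ^ (m - k) * cnorm j g ^ (m - k) := mul_pow _ _ _
            _ ≤ (8 ^ ((m-k)^3) * (cnorm k f ^ (m - i) * cnorm m f ^ (i - k))) *
                cnorm j g ^ (m - k) :=
                mul_le_mul_of_nonneg_right hIf (pow_nonneg he0 _)
            _ = 8 ^ ((m-k)^3) * ((cnorm k f ^ (m - i) * cnorm j g ^ (m - i)) *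
                (cnorm m f ^ (i - k) * cnorm j g ^ (i - k))) := by
                rw [hsplit]; ring
            _ = 8 ^ ((m-k)^3) * ((cnorm k f * cnorm j g) ^ (m - i) *
                (cnorm m f * cnorm j g) ^ (i - k)) := by
                rw [mul_pow, mul_pow]
        exact pair (mul_nonneg (cnorm_nonneg _ _) he0)
          (mul_nonneg (cnorm_nonneg _ _) he0) (mul_nonneg (cnorm_nonneg _ _) he0)
          (m - k) (m - i) (i - k) ((m-k)^3) (by omega) (by omega) key
      · -- main case A
        have r1 : ((j:ℝ)-n)*((m:ℝ)-k) = ((m:ℝ)-i)*((l:ℝ)-n) := by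
          linear_combination ((m:ℝ)-(k:ℝ)) * hj + ((l:ℝ)-(n:ℝ)) * hi
        have r2 : ((l:ℝ)-j)*((m:ℝ)-k) = ((i:ℝ)-k)*((l:ℝ)-n) := by
          linear_combination (-((m:ℝ)-(k:ℝ))) * hj + (-((l:ℝ)-(n:ℝ))) * hi
        have hid1 : (j-n)*(m-k) = (m-i)*(l-n) := by
          have : (((j-n)*(m-k) : ℕ) : ℝ) = (((m-i)*(l-n) : ℕ) : ℝ) := by
            push_cast [Nat.cast_sub hnj, Nat.cast_sub hkm, Nat.cast_sub him, Nat.cast_sub hnl]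
            linarith [r1]
          exact_mod_cast this
        have hid2 : (l-j)*(m-k) = (i-k)*(l-n) := by
          have : (((l-j)*(m-k) : ℕ) : ℝ) = (((i-k)*(l-n) : ℕ) : ℝ) := by
            push_cast [Nat.cast_sub hjl, Nat.cast_sub hkm, Nat.cast_sub hki, Nat.cast_sub hnl]
            linarith [r2]
          exact_mod_cast this
        refine ⟨8 ^ ((m-k)^3*(l-n) + (l-n)^3*(m-k)), fun f g hf hfb hg hgb => ?_⟩
        have hIf := interp (fun p => cnorm p f) (fun p => cnorm_nonneg p f)
          (cnorm_landau hf hfb) k i m hki him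
        have hIg := interp (fun p => cnorm p g) (fun p => cnorm_nonneg p g)
          (cnorm_landau hg hgb) n j l hnj hjl
        have key := combine_pows (cnorm_nonneg i f) (cnorm_nonneg j g)
          (cnorm_nonneg k f) (cnorm_nonneg m f) (cnorm_nonneg l g) (cnorm_nonneg n g)
          hIf hIg hid1 hid2
        refine pair (mul_nonneg (cnorm_nonneg _ _) (cnorm_nonneg _ _))
          (mul_nonneg (cnorm_nonneg _ _) (cnorm_nonneg _ _))
          (mul_nonneg (cnorm_nonneg _ _) (cnorm_nonneg _ _))
          ((m-k)*(l-n)) ((m-i)*(l-n)) ((i-k)*(l-n)) _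
          (Nat.mul_pos (by omega) (by omega)) ?_ key
        have hsum : (m-i) + (i-k) = m-k := by omega
        calc (m-i)*(l-n) + (i-k)*(l-n) = ((m-i) + (i-k))*(l-n) := (add_mul _ _ _).symm
          _ = (m-k)*(l-n) := by rw [hsum]
  · -- branch B : l ≤ j ≤ n
    have hlnR : (l:ℝ) ≤ n := by exact_mod_cast hln
    have hlj : l ≤ j := by
      have : (l:ℝ) ≤ j := by
        rw [hj]; nlinarith [mul_le_mul_of_nonneg_left hlnR (by linarith : (0:ℝ) ≤ 1 - lam)]
      exact_mod_cast this
    have hjn : j ≤ n := by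
      have : (j:ℝ) ≤ n := by
        rw [hj]; nlinarith [mul_le_mul_of_nonneg_left hlnR hl0]
      exact_mod_cast this
    by_cases hM : m - k = 0
    · obtain rfl : i = k := by omega
      obtain rfl : i = m := by omega
      by_cases hN : n - l = 0
      · obtain rfl : j = l := by omega
        obtain rfl : j = n := by omega
        refine ⟨1, fun f g hf hfb hg hgb => ?_⟩
        have h1 : 0 ≤ cnorm i f * cnorm j g :=
          mul_nonneg (cnorm_nonneg _ _) (cnorm_nonneg _ _)
        linarith
      · refine ⟨8 ^ ((n-l)^3), fun f g hf hfb hg hgb => ?_⟩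
        have hc0 : (0:ℝ) ≤ cnorm i f := cnorm_nonneg _ _
        have hIg := interp (fun p => cnorm p g) (fun p => cnorm_nonneg p g)
          (cnorm_landau hg hgb) l j n hlj hjn
        have hsplit : cnorm i f ^ (n - l) = cnorm i f ^ (n - j) * cnorm i f ^ (j - l) := by
          rw [← pow_add]; congr 1; omega
        have key : (cnorm i f * cnorm j g) ^ (n - l) ≤
            8 ^ ((n-l)^3) * ((cnorm i f * cnorm l g) ^ (n - j) *
              (cnorm i f * cnorm n g) ^ (j - l)) := by
          calc (cnorm i f * cnorm j g) ^ (n - l)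
              = cnorm i f ^ (n - l) * cnorm j g ^ (n - l) := mul_pow _ _ _
            _ ≤ cnorm i f ^ (n - l) *
                (8 ^ ((n-l)^3) * (cnorm l g ^ (n - j) * cnorm n g ^ (j - l))) :=
                mul_le_mul_of_nonneg_left hIg (pow_nonneg hc0 _)
            _ = 8 ^ ((n-l)^3) * ((cnorm i f ^ (n - j) * cnorm l g ^ (n - j)) *
                (cnorm i f ^ (j - l) * cnorm n g ^ (j - l))) := by
                rw [hsplit]; ring
            _ = 8 ^ ((n-l)^3) * ((cnorm i f * cnorm l g) ^ (n - j) *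
                (cnorm i f * cnorm n g) ^ (j - l)) := by
                rw [mul_pow, mul_pow]
        exact pair (mul_nonneg hc0 (cnorm_nonneg _ _))
          (mul_nonneg hc0 (cnorm_nonneg _ _)) (mul_nonneg hc0 (cnorm_nonneg _ _))
          (n - l) (n - j) (j - l) ((n-l)^3) (by omega) (by omega) key
    · by_cases hN : n - l = 0
      · obtain rfl : j = l := by omega
        obtain rfl : j = n := by omega
        refine ⟨8 ^ ((m-k)^3), fun f g hf hfb hg hgb => ?_⟩
        have he0 : (0:ℝ) ≤ cnorm j g := cnorm_nonneg _ _
        have hIf := interp (fun p => cnorm p f) (fun p => cnorm_nonneg p f)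
          (cnorm_landau hf hfb) k i m hki him
        have hsplit : cnorm j g ^ (m - k) = cnorm j g ^ (m - i) * cnorm j g ^ (i - k) := by
          rw [← pow_add]; congr 1; omega
        have key : (cnorm i f * cnorm j g) ^ (m - k) ≤
            8 ^ ((m-k)^3) * ((cnorm k f * cnorm j g) ^ (m - i) *
              (cnorm m f * cnorm j g) ^ (i - k)) := by
          calc (cnorm i f * cnorm j g) ^ (m - k)
              = cnorm i f ^ (m - k) * cnorm j g ^ (m - k) := mul_pow _ _ _
            _ ≤ (8 ^ ((m-k)^3) * (cnorm k f ^ (m - i) * cnorm m f ^ (i - k))) *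
                cnorm j g ^ (m - k) :=
                mul_le_mul_of_nonneg_right hIf (pow_nonneg he0 _)
            _ = 8 ^ ((m-k)^3) * ((cnorm k f ^ (m - i) * cnorm j g ^ (m - i)) *
                (cnorm m f ^ (i - k) * cnorm j g ^ (i - k))) := by
                rw [hsplit]; ring
            _ = 8 ^ ((m-k)^3) * ((cnorm k f * cnorm j g) ^ (m - i) *
                (cnorm m f * cnorm j g) ^ (i - k)) := by
                rw [mul_pow, mul_pow]
        exact pair (mul_nonneg (cnorm_nonneg _ _) he0)
          (mul_nonneg (cnorm_nonneg _ _) he0) (mul_nonneg (cnorm_nonneg _ _) he0)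
          (m - k) (m - i) (i - k) ((m-k)^3) (by omega) (by omega) key
      · -- main case B
        have r1 : ((n:ℝ)-j)*((m:ℝ)-k) = ((m:ℝ)-i)*((n:ℝ)-l) := by
          linear_combination (-((m:ℝ)-(k:ℝ))) * hj + ((n:ℝ)-(l:ℝ)) * hi
        have r2 : ((j:ℝ)-l)*((m:ℝ)-k) = ((i:ℝ)-k)*((n:ℝ)-l) := by
          linear_combination ((m:ℝ)-(k:ℝ)) * hj + (-((n:ℝ)-(l:ℝ))) * hi
        have hid1 : (n-j)*(m-k) = (m-i)*(n-l) := by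
          have : (((n-j)*(m-k) : ℕ) : ℝ) = (((m-i)*(n-l) : ℕ) : ℝ) := by
            push_cast [Nat.cast_sub hjn, Nat.cast_sub hkm, Nat.cast_sub him, Nat.cast_sub hln]
            linarith [r1]
          exact_mod_cast this
        have hid2 : (j-l)*(m-k) = (i-k)*(n-l) := by
          have : (((j-l)*(m-k) : ℕ) : ℝ) = (((i-k)*(n-l) : ℕ) : ℝ) := by
            push_cast [Nat.cast_sub hlj, Nat.cast_sub hkm, Nat.cast_sub hki, Nat.cast_sub hln]
            linarith [r2]
          exact_mod_cast this
        refine ⟨8 ^ ((m-k)^3*(n-l) + (n-l)^3*(m-k)), fun f g hf hfb hg hgb => ?_⟩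
        have hIf := interp (fun p => cnorm p f) (fun p => cnorm_nonneg p f)
          (cnorm_landau hf hfb) k i m hki him
        have hIg := interp (fun p => cnorm p g) (fun p => cnorm_nonneg p g)
          (cnorm_landau hg hgb) l j n hlj hjn
        rw [mul_comm (cnorm l g ^ (n - j)) (cnorm n g ^ (j - l))] at hIg
        have key := combine_pows (cnorm_nonneg i f) (cnorm_nonneg j g)
          (cnorm_nonneg k f) (cnorm_nonneg m f) (cnorm_nonneg l g) (cnorm_nonneg n g)
          hIf hIg hid1 hid2
        refine pair (mul_nonneg (cnorm_nonneg _ _) (cnorm_nonneg _ _))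
          (mul_nonneg (cnorm_nonneg _ _) (cnorm_nonneg _ _))
          (mul_nonneg (cnorm_nonneg _ _) (cnorm_nonneg _ _))
          ((m-k)*(n-l)) ((m-i)*(n-l)) ((i-k)*(n-l)) _
          (Nat.mul_pos (by omega) (by omega)) ?_ key
        have hsum : (m-i) + (i-k) = m-k := by omega
        calc (m-i)*(n-l) + (i-k)*(n-l) = ((m-i) + (i-k))*(n-l) := (add_mul _ _ _).symm
          _ = (m-k)*(n-l) := by rw [hsum]

/-- Mixed interpolation inequality (Hamilton): if `(i,j)` lies on the segment joining
`(k,l)` and `(m,n)`, then `|f|_i |g|_j ≤ C (|f|_k |g|_l + |f|_m |g|_n)`. -/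
theorem cnorm_mixed_interpolation (i j k l m n d : ℕ)
    (hseg : ∃ lam : ℝ, 0 ≤ lam ∧ lam ≤ 1 ∧
      (i : ℝ) = lam * k + (1 - lam) * m ∧ (j : ℝ) = lam * l + (1 - lam) * n)
    (hd : 1 ≤ d) :
    ∃ C : ℝ, ∀ f g : (Fin d → ℝ) → ℝ,
      ContDiff ℝ (⊤ : ℕ∞) f → BoundedDerivs f → ContDiff ℝ (⊤ : ℕ∞) g → BoundedDerivs g →
      cnorm i f * cnorm j g ≤ C * (cnorm k f * cnorm l g + cnorm m f * cnorm n g) := by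
  obtain ⟨lam, hl0, hl1, hi, hj⟩ := hseg
  rcases le_total k m with hkm | hmk
  · exact aux i j k l m n d lam hl0 hl1 hi hj hkm
  · obtain ⟨C, hC⟩ := aux i j m n k l d (1 - lam) (by linarith) (by linarith)
      (by rw [hi]; ring) (by rw [hj]; ring) hmk
    refine ⟨C, fun f g hf hfb hg hgb => ?_⟩
    calc cnorm i f * cnorm j g
        ≤ C * (cnorm m f * cnorm n g + cnorm k f * cnorm l g) := hC f g hf hfb hg hgb
      _ = C * (cnorm k f * cnorm l g + cnorm m f * cnorm n g) := by ring
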